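/- Let 0 < k₋ ≤ k⁺, let u : ℝ → ℂ be measurable, let A ∈ ℂ, τ, t ∈ ℝ with t ≠ τ, and C > 0, and assume |u(k) − A·exp(i k τ)| ≤ C/k for all k ∈ [k₋, k⁺]. Then |∫_{k₋}^{k⁺} u(k)·exp(−i k t)·k^{−1/2} dk| ≤ 3|A|/(|t − τ|·√(k₋)) + 2C/√(k₋). -/

import Mathlib

open MeasureTheory intervalIntegral Set

/-!
Split `u k = A * exp (i k τ) + r k` with `‖r k‖ ≤ C / k`. Against the weight `k ^ (-1/2)`, the
remainder contributes at most `∫ C k ^ (-3/2) ≤ 2 C / √k₋`. The main term is the oscillatory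
integral `A ∫ exp (i (τ - t) k) k ^ (-1/2) dk`; integrating by parts against
`exp (i μ k) / (i μ)` and using that `k ^ (-1/2)` is positive and decreasing (so its total
variation on `[k₋, k⁺]` is at most its value at `k₋`) bounds it by `2 ‖A‖ / (|t - τ| √k₋)`.
-/

theorem rpow_neg_half_eq_inv_sqrt {x : ℝ} (hx : 0 ≤ x) : x ^ (-(1 / 2 : ℝ)) = (√x)⁻¹ := by
  rw [Real.rpow_neg hx, ← Real.sqrt_eq_rpow]

theorem norm_integral_exp_mul_le_of_deriv_nonpos {a b μ : ℝ} {g g' : ℝ → ℝ} (hab : a ≤ b)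
    (hμ : μ ≠ 0) (hg : ∀ x ∈ Icc a b, HasDerivAt g (g' x) x)
    (hg' : IntervalIntegrable g' volume a b) (hg'_nonpos : ∀ x ∈ Icc a b, g' x ≤ 0)
    (hgb : 0 ≤ g b) :
    ‖∫ k in a..b, Complex.exp (Complex.I * μ * k) * g k‖ ≤ 2 * g a / |μ| := by
  rw [← uIcc_of_le hab] at hg
  set v : ℝ → ℂ := fun k => Complex.exp (Complex.I * μ * k) / (Complex.I * μ)
  have hIμ : Complex.I * μ ≠ 0 := mul_ne_zero Complex.I_ne_zero (by exact_mod_cast hμ)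
  have hv : ∀ x : ℝ, HasDerivAt v (Complex.exp (Complex.I * μ * x)) x := fun x => by
    have := (((hasDerivAt_id (x : ℂ)).const_mul (Complex.I * μ)).cexp.comp_ofReal).div_const
      (Complex.I * μ)
    simpa [hIμ] using this
  have hv_norm : ∀ x, ‖v x‖ = |μ|⁻¹ := fun x => by simp [v, Complex.norm_exp]
  have hvariation : ∫ k in a..b, -g' k = g a - g b := by
    rw [intervalIntegral.integral_neg, integral_eq_sub_of_hasDerivAt hg hg', neg_sub]
  have hmono : g b ≤ g a := sub_nonneg.1 <|
    hvariation ▸ integral_nonneg hab fun k hk => neg_nonneg.2 (hg'_nonpos k hk)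
  have hrem : ‖∫ k in a..b, g' k • v k‖ ≤ (g a - g b) / |μ| := calc
    ‖∫ k in a..b, g' k • v k‖ ≤ ∫ k in a..b, -g' k / |μ| := by
      refine norm_integral_le_of_norm_le hab (.of_forall fun k hk => ?_) (hg'.neg.div_const _)
      rw [norm_smul, hv_norm, Real.norm_eq_abs,
        abs_of_nonpos (hg'_nonpos k (Ioc_subset_Icc_self hk)), div_eq_mul_inv]
    _ = (g a - g b) / |μ| := by rw [intervalIntegral.integral_div, hvariation]
  simp only [mul_comm (Complex.exp _), ← Complex.real_smul]
  have hphase : Continuous fun x : ℝ => Complex.exp (Complex.I * μ * x) := by fun_prop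
  rw [integral_smul_deriv_eq_deriv_smul hg (fun x _ => hv x) hg' (hphase.intervalIntegrable _ _)]
  calc ‖g b • v b - g a • v a - ∫ k in a..b, g' k • v k‖
      ≤ ‖g b • v b‖ + ‖g a • v a‖ + ‖∫ k in a..b, g' k • v k‖ :=
        norm_sub_le_of_le (norm_sub_le _ _) le_rfl
    _ ≤ g b / |μ| + g a / |μ| + (g a - g b) / |μ| := by
      rw [norm_smul, norm_smul, hv_norm, hv_norm, Real.norm_eq_abs, Real.norm_eq_abs,
        abs_of_nonneg hgb, abs_of_nonneg (hgb.trans hmono), ← div_eq_mul_inv, ← div_eq_mul_inv]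
      gcongr
    _ = 2 * g a / |μ| := by ring

theorem intervalIntegrable_rpow_of_pos {a b : ℝ} (ha : 0 < a) (hab : a ≤ b) (r : ℝ) :
    IntervalIntegrable (fun x => x ^ r) volume a b :=
  intervalIntegrable_rpow (.inr (notMem_uIcc_of_lt ha (ha.trans_le hab)))

theorem norm_integral_exp_mul_rpow_neg_half_le {a b μ : ℝ} (ha : 0 < a) (hab : a ≤ b)
    (hμ : μ ≠ 0) :
    ‖∫ k in a..b, Complex.exp (Complex.I * μ * k) * ((k ^ (-(1 / 2 : ℝ)) : ℝ) : ℂ)‖ ≤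
      2 / (|μ| * √a) := by
  have hpos : ∀ x ∈ Icc a b, 0 < x := fun x hx => ha.trans_le hx.1
  have hderiv : ∀ x ∈ Icc a b,
      HasDerivAt (fun k => k ^ (-(1 / 2 : ℝ))) (-(1 / 2) * x ^ (-(3 / 2 : ℝ))) x := by
    intro x hx
    convert Real.hasDerivAt_rpow_const (p := -(1 / 2 : ℝ)) (.inl (hpos x hx).ne') using 2
    norm_num
  calc _ ≤ 2 * a ^ (-(1 / 2 : ℝ)) / |μ| :=
        norm_integral_exp_mul_le_of_deriv_nonpos (g := fun k => k ^ (-(1 / 2 : ℝ))) hab hμ hderiv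
          ((intervalIntegrable_rpow_of_pos ha hab _).const_mul _)
          (fun x hx => by have := Real.rpow_pos_of_pos (hpos x hx) (-(3 / 2 : ℝ)); linarith)
          (Real.rpow_nonneg (ha.le.trans hab) _)
    _ = 2 / (|μ| * √a) := by rw [rpow_neg_half_eq_inv_sqrt ha.le]; ring

theorem integral_rpow_neg_three_halves_le {a b : ℝ} (ha : 0 < a) (hab : a ≤ b) :
    ∫ k in a..b, k ^ (-(3 / 2 : ℝ)) ≤ 2 / √a := by
  rw [integral_rpow (.inr ⟨by norm_num, notMem_uIcc_of_lt ha (ha.trans_le hab)⟩),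
    show -(3 / 2 : ℝ) + 1 = -(1 / 2) by norm_num, rpow_neg_half_eq_inv_sqrt ha.le,
    rpow_neg_half_eq_inv_sqrt (ha.le.trans hab)]
  have hb : 0 ≤ (√b)⁻¹ := by positivity
  rw [show ((√b)⁻¹ - (√a)⁻¹) / -(1 / 2) = 2 * (√a)⁻¹ - 2 * (√b)⁻¹ by ring, div_eq_mul_inv]
  linarith

theorem norm_mul_rpow_neg_half_le {z : ℂ} {k C : ℝ} (hk : 0 < k) (hz : ‖z‖ ≤ C / k) :
    ‖z * ((k ^ (-(1 / 2 : ℝ)) : ℝ) : ℂ)‖ ≤ C * k ^ (-(3 / 2 : ℝ)) := by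
  have hsplit : k ^ (-(3 / 2 : ℝ)) = k⁻¹ * k ^ (-(1 / 2 : ℝ)) := by
    rw [← Real.rpow_neg_one, ← Real.rpow_add hk]; norm_num
  rw [norm_mul, Complex.norm_real, Real.norm_of_nonneg (by positivity), hsplit, ← mul_assoc,
    ← div_eq_mul_inv]
  gcongr

section Remainder

variable {F : ℝ → ℂ} {a b C : ℝ}

theorem intervalIntegrable_mul_rpow_neg_half (ha : 0 < a) (hab : a ≤ b)
    (hF : AEStronglyMeasurable F (volume.restrict (Ioc a b)))
    (hbound : ∀ k ∈ Icc a b, ‖F k‖ ≤ C / k) :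
    IntervalIntegrable (fun k => F k * ((k ^ (-(1 / 2 : ℝ)) : ℝ) : ℂ)) volume a b := by
  refine ((intervalIntegrable_rpow_of_pos ha hab (-(3 / 2))).const_mul C
    |>.mono_fun' ?_ ?_)
  · rw [uIoc_of_le hab]
    have hweight : Measurable fun k : ℝ => ((k ^ (-(1 / 2 : ℝ)) : ℝ) : ℂ) := by fun_prop
    exact hF.mul hweight.aestronglyMeasurable
  · rw [uIoc_of_le hab]
    filter_upwards [ae_restrict_mem measurableSet_Ioc] with k hk
    exact norm_mul_rpow_neg_half_le (ha.trans hk.1) (hbound k (Ioc_subset_Icc_self hk))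

theorem norm_integral_mul_rpow_neg_half_le (ha : 0 < a) (hab : a ≤ b) (hC : 0 ≤ C)
    (hbound : ∀ k ∈ Icc a b, ‖F k‖ ≤ C / k) :
    ‖∫ k in a..b, F k * ((k ^ (-(1 / 2 : ℝ)) : ℝ) : ℂ)‖ ≤ 2 * C / √a := calc
  _ ≤ ∫ k in a..b, C * k ^ (-(3 / 2 : ℝ)) :=
      norm_integral_le_of_norm_le hab (.of_forall fun k hk =>
        norm_mul_rpow_neg_half_le (ha.trans hk.1) (hbound k (Ioc_subset_Icc_self hk)))
        ((intervalIntegrable_rpow_of_pos ha hab _).const_mul C)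
  _ ≤ C * (2 / √a) := by
      rw [intervalIntegral.integral_const_mul]
      exact mul_le_mul_of_nonneg_left (integral_rpow_neg_three_halves_le ha hab) hC
  _ = 2 * C / √a := by ring

end Remainder

/-- Off-line case of Proposition 4.1 in dimension `n = 2`, in abstract form. -/
theorem stmt_9 (kminus kplus : ℝ) (hk : 0 < kminus) (hkk : kminus ≤ kplus)
    (u : ℝ → ℂ) (hu : Measurable u) (A : ℂ) (τ t C : ℝ) (ht : t ≠ τ) (hC : 0 < C)
    (h : ∀ k ∈ Set.Icc kminus kplus, ‖u k - A * Complex.exp (Complex.I * k * τ)‖ ≤ C / k) :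
    ‖∫ k in kminus..kplus,
        u k * Complex.exp (-(Complex.I * k * t)) * ((k ^ (-(1 / 2 : ℝ)) : ℝ) : ℂ)‖ ≤
      3 * ‖A‖ / (|t - τ| * Real.sqrt kminus) + 2 * C / Real.sqrt kminus := by
  set F : ℝ → ℂ := fun k =>
    (u k - A * Complex.exp (Complex.I * k * τ)) * Complex.exp (-(Complex.I * k * t))
  have hF : ∀ k ∈ Icc kminus kplus, ‖F k‖ ≤ C / k := fun k hk => by
    simpa [F, Complex.norm_exp] using h k hk
  have hsplit : ∀ k : ℝ,
      u k * Complex.exp (-(Complex.I * k * t)) * ((k ^ (-(1 / 2 : ℝ)) : ℝ) : ℂ) =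
      A * (Complex.exp (Complex.I * ↑(τ - t) * k) * ((k ^ (-(1 / 2 : ℝ)) : ℝ) : ℂ)) +
        F k * ((k ^ (-(1 / 2 : ℝ)) : ℝ) : ℂ) := fun k => by
    rw [show Complex.I * ↑(τ - t) * k = Complex.I * k * τ + -(Complex.I * k * t) by
      push_cast; ring, Complex.exp_add]
    ring
  have hweight :
      IntervalIntegrable (fun k : ℝ => ((k ^ (-(1 / 2 : ℝ)) : ℝ) : ℂ)) volume kminus kplus :=
    have h := intervalIntegrable_rpow_of_pos hk hkk (-(1 / 2))
    ⟨h.1.ofReal, h.2.ofReal⟩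
  have hmain := (hweight.continuousOn_mul (by fun_prop :
    Continuous fun k : ℝ => Complex.exp (Complex.I * ↑(τ - t) * k)).continuousOn).const_mul A
  have hrem := intervalIntegrable_mul_rpow_neg_half hk hkk
    (by fun_prop : Measurable F).aestronglyMeasurable hF
  have hosc := norm_integral_exp_mul_rpow_neg_half_le hk hkk (sub_ne_zero.2 ht.symm)
  have herr := norm_integral_mul_rpow_neg_half_le hk hkk hC.le hF
  rw [intervalIntegral.integral_congr fun k _ => hsplit k,
    intervalIntegral.integral_add hmain hrem, intervalIntegral.integral_const_mul]
  calc _ ≤ ‖A‖ * (2 / (|τ - t| * √kminus)) + 2 * C / √kminus :=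
        (norm_add_le _ _).trans (add_le_add (by rw [norm_mul]; gcongr) herr)
    _ ≤ _ := by
      rw [abs_sub_comm, mul_div_assoc']
      gcongr ?_ / _ + _
      linarith [norm_nonneg A]
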